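/- arXiv:1312.7777 — 6 statements merged into one kernel-verified Lean document; each statement's English description precedes it below -/
import Mathlib

section
/- Let w be an isometry of a finite-dimensional euclidean space E. The move-set Mov(w) = {w(x) - x : x ∈ E} is an affine subspace of the vector space V of translations, and the set Min(w) of points moved a minimal distance by w is an affine subspace of E. -/
/-!
The displacement `x ↦ w x -ᵥ x` of an isometry is an affine map `E →ᵃ[ℝ] V` (Mazur–Ulam),
so `Mov(w)`, its range, is an affine subspace. The minimal norm on this range is attained, and
by strict convexity of the norm at a single vector `v₀`; hence `Min(w)` is the fibre of the
displacement over `v₀`, again an affine subspace.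
-/

open Metric

namespace AffineMap

theorem coe_map_top {k V₁ P₁ V₂ P₂ : Type*} [Ring k] [AddCommGroup V₁] [Module k V₁]
    [AddTorsor V₁ P₁] [AddCommGroup V₂] [Module k V₂] [AddTorsor V₂ P₂] (f : P₁ →ᵃ[k] P₂) :
    (((⊤ : AffineSubspace k P₁).map f : AffineSubspace k P₂) : Set P₂) = Set.range f := by
  rw [AffineSubspace.coe_map, AffineSubspace.top_coe, Set.image_univ]

variable {V₁ P V : Type*} [AddCommGroup V₁] [Module ℝ V₁] [AddTorsor V₁ P]
  [NormedAddCommGroup V] [NormedSpace ℝ V] (f : P →ᵃ[ℝ] V)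

theorem exists_forall_norm_le [FiniteDimensional ℝ V] [Nonempty P] :
    ∃ x, ∀ y, ‖f x‖ ≤ ‖f y‖ := by
  have hclosed : IsClosed (Set.range f) := by
    simpa only [coe_map_top] using ((⊤ : AffineSubspace ℝ P).map f).closed_of_finiteDimensional
  obtain ⟨_, ⟨x, rfl⟩, hx⟩ :=
    hclosed.exists_infDist_eq_dist (Set.range_nonempty f) (0 : V)
  refine ⟨x, fun y => ?_⟩
  simpa [hx] using infDist_le_dist_of_mem (Set.mem_range_self (f := f) y) (x := (0 : V))

theorem eq_of_forall_norm_le [StrictConvexSpace ℝ V] {x y : P}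
    (hx : ∀ z, ‖f x‖ ≤ ‖f z‖) (hy : ∀ z, ‖f y‖ ≤ ‖f z‖) : f x = f y := by
  by_contra hne
  have hlt := (norm_midpoint_lt_iff (le_antisymm (hx y) (hy x))).2 hne
  have hmid : f (midpoint ℝ x y) = (1 / 2 : ℝ) • (f x + f y) := by
    rw [f.map_midpoint, midpoint_eq_smul_add, invOf_eq_inv, one_div]
  exact (hx (midpoint ℝ x y)).not_gt (hmid ▸ hlt)

theorem exists_affineSubspace_coe_eq_setOf_forall_norm_le [FiniteDimensional ℝ V]
    [StrictConvexSpace ℝ V] [Nonempty P] :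
    ∃ B : AffineSubspace ℝ P,
      (B : Set P) = {x | ∀ y, ‖f x‖ ≤ ‖f y‖} ∧ (B : Set P).Nonempty := by
  obtain ⟨x₀, hx₀⟩ := f.exists_forall_norm_le
  refine ⟨(affineSpan ℝ {f x₀}).comap f, ?_, x₀, by simp⟩
  ext x
  simp only [AffineSubspace.coe_comap, AffineSubspace.coe_affineSpan_singleton,
    Set.mem_preimage, Set.mem_singleton_iff, Set.mem_ofPred_eq]
  exact ⟨fun h => h ▸ hx₀, fun hx => f.eq_of_forall_norm_le hx hx₀⟩

end AffineMap

namespace IsometryEquiv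

variable {V E : Type*} [NormedAddCommGroup V] [NormedSpace ℝ V] [MetricSpace E]
  [NormedAddTorsor V E]

noncomputable def displacement (w : E ≃ᵢ E) : E →ᵃ[ℝ] V :=
  w.toRealAffineIsometryEquiv.toAffineEquiv.toAffineMap -ᵥ AffineMap.id ℝ E

@[simp]
theorem displacement_apply (w : E ≃ᵢ E) (x : E) : w.displacement x = w x -ᵥ x := by
  simp [displacement, AffineMap.vsub_apply, coeFn_toRealAffineIsometryEquiv]

end IsometryEquiv

/-- For an isometry `w` of a finite-dimensional euclidean space `E`, the move-set
`Mov(w) = {w(x) -ᵥ x : x ∈ E}` is an affine subspace of the space of translations `V`,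
and the min-set `Min(w)` of points moved a minimal distance is a (nonempty) affine
subspace of `E`. -/
theorem moveSet_minSet_affine
    {V E : Type*} [NormedAddCommGroup V] [InnerProductSpace ℝ V] [FiniteDimensional ℝ V]
    [MetricSpace E] [NormedAddTorsor V E] (w : E ≃ᵢ E) :
    (∃ M : AffineSubspace ℝ V, (M : Set V) = {v : V | ∃ x : E, w x -ᵥ x = v} ∧
      (M : Set V).Nonempty) ∧
    (∃ B : AffineSubspace ℝ E,
      (B : Set E) = {x : E | ∀ y : E, dist (w x) x ≤ dist (w y) y} ∧
      (B : Set E).Nonempty) := by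
  have hMov : {v : V | ∃ x : E, w x -ᵥ x = v} = Set.range w.displacement := by
    simp [Set.range]
  have hdist : ∀ x, dist (w x) x = ‖w.displacement x‖ := fun x => by
    rw [dist_eq_norm_vsub V, w.displacement_apply]
  have hrange := w.displacement.coe_map_top
  refine ⟨⟨_, hrange.trans hMov.symm, hrange ▸ Set.range_nonempty _⟩, ?_⟩
  simp only [hdist]
  exact w.displacement.exists_affineSubspace_coe_eq_setOf_forall_norm_le
end

section
/- An isometry w of a finite-dimensional euclidean space E has a fixed point if and only if its move-set Mov(w) = {w(x)-x : x ∈ E} is a linear subspace of V (equivalently, contains the zero vector). -/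
/-- An isometry `w` of a finite-dimensional euclidean space has a fixed point iff its
move-set `Mov(w) = {w(x) -ᵥ x}` is a linear subspace of `V`, equivalently iff the
move-set contains the zero vector. -/
theorem fixed_point_iff_moveSet_linear
    {V E : Type*} [NormedAddCommGroup V] [InnerProductSpace ℝ V] [FiniteDimensional ℝ V]
    [MetricSpace E] [NormedAddTorsor V E] (w : E ≃ᵢ E) :
    ((∃ x : E, w x = x) ↔
      ∃ U : Submodule ℝ V, (U : Set V) = {v : V | ∃ x : E, w x -ᵥ x = v}) ∧
    ((∃ x : E, w x = x) ↔ (0 : V) ∈ {v : V | ∃ x : E, w x -ᵥ x = v}) := by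
  have h0 : (∃ x : E, w x = x) ↔ (0 : V) ∈ {v : V | ∃ x : E, w x -ᵥ x = v} := by
    constructor
    · rintro ⟨x, hx⟩
      exact ⟨x, by simp [hx]⟩
    · rintro ⟨x, hx⟩
      exact ⟨x, by rwa [vsub_eq_zero_iff_eq] at hx⟩
  refine ⟨?_, h0⟩
  constructor
  · rintro ⟨p, hp⟩
    set a := w.toRealAffineIsometryEquiv with ha
    have haw : ∀ x : E, a x = w x := fun x =>
      congrFun (w.coeFn_toRealAffineIsometryEquiv) x
    set f : V →ₗ[ℝ] V :=
      a.linearIsometryEquiv.toLinearEquiv.toLinearMap - LinearMap.id with hf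
    refine ⟨LinearMap.range f, ?_⟩
    ext v
    simp only [SetLike.mem_coe, LinearMap.mem_range, Set.mem_setOf_eq]
    have key : ∀ u : V, f u = w (u +ᵥ p) -ᵥ (u +ᵥ p) := by
      intro u
      have := a.map_vadd p u
      rw [haw, haw, hp] at this
      rw [this]
      simp [hf, vadd_vsub_assoc, vsub_vadd_eq_vsub_sub, vsub_self]
    constructor
    · rintro ⟨u, rfl⟩
      exact ⟨u +ᵥ p, (key u).symm⟩
    · rintro ⟨x, rfl⟩
      refine ⟨x -ᵥ p, ?_⟩
      rw [key (x -ᵥ p), vsub_vadd]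
  · rintro ⟨U, hU⟩
    exact h0.mpr (hU ▸ U.zero_mem)
end

section
/- Scherk's theorem: let w be an isometry of an n-dimensional euclidean space E whose move-set is k-dimensional. Then the minimal number of reflections (isometries fixing a hyperplane pointwise) needed to express w as a product is k if w has a fixed point, and k+2 if w has no fixed point. -/
open Module

/-- A reflection of a euclidean space: a nontrivial isometry fixing an affine
hyperplane (a nonempty affine subspace whose direction has codimension one)
pointwise. -/
def IsEuclideanReflection {V E : Type*} [NormedAddCommGroup V] [InnerProductSpace ℝ V]
    [FiniteDimensional ℝ V] [MetricSpace E] [NormedAddTorsor V E] (r : E ≃ᵢ E) : Prop :=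
  r ≠ 1 ∧ ∃ H : AffineSubspace ℝ E, (H : Set E).Nonempty ∧
    finrank ℝ H.direction + 1 = finrank ℝ V ∧ ∀ x ∈ H, r x = x

/-! By Mazur–Ulam `w` is affine; let `L` be its linear part. Then `Mov(w)` is the affine subspace
`(w x₀ -ᵥ x₀) + range (L - 1)`, so `k = dim range (L - 1)`, and `w` has a fixed point iff
`0 ∈ Mov(w)`. A reflection moves every point along one fixed line, so for a product of `m`
reflections `Mov(w)` spans a space of dimension at most `m`. That span has dimension `k` if `w`
has a fixed point and `k + 1` otherwise.

If `w` fixes `p`, Cartan–Dieudonné writes `L` as a product of at most `k` linear reflections, and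
conjugating them to `p` factors `w`. Otherwise `w = τ ∘ w'`, where `τ` is the translation by
`w x₀ -ᵥ x₀` and `w'` fixes `x₀` and has linear part `L`; since `τ` is a product of two
reflections in parallel hyperplanes, `w` is a product of `k + 2` reflections. Length `k + 1` is
ruled out by parity: the linear part of a product of `m` reflections has determinant `(-1) ^ m`. -/

open Submodule

theorem vectorSpan_le_span {k V : Type*} [Ring k] [AddCommGroup V] [Module k V] (s : Set V) :
    vectorSpan k s ≤ span k s := by
  rw [vectorSpan_def, span_le]
  rintro _ ⟨a, ha, b, hb, rfl⟩
  exact sub_mem (subset_span ha) (subset_span hb)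

theorem span_eq_vectorSpan_of_zero_mem {k V : Type*} [Ring k] [AddCommGroup V] [Module k V]
    {s : Set V} (hs : 0 ∈ s) : span k s = vectorSpan k s := by
  simp [vectorSpan_eq_span_vsub_set_right k hs]

theorem LinearMap.finrank_orthogonal_ker {𝕜 V : Type*} [RCLike 𝕜] [NormedAddCommGroup V]
    [InnerProductSpace 𝕜 V] [FiniteDimensional 𝕜 V] (f : V →ₗ[𝕜] V) :
    finrank 𝕜 (LinearMap.ker f)ᗮ = finrank 𝕜 (LinearMap.range f) := by
  have := (LinearMap.ker f).finrank_add_finrank_orthogonal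
  have := f.finrank_range_add_finrank_ker
  omega

namespace LinearIsometryEquiv

section NormedSpace

variable {V E : Type*} [NormedAddCommGroup V] [NormedSpace ℝ V] [MetricSpace E]
  [NormedAddTorsor V E]

def movSpace (L : V ≃ₗᵢ[ℝ] V) : Submodule ℝ V :=
  LinearMap.range ((L : V →ₗ[ℝ] V) - 1)

theorem finrank_movSpace_le_one [FiniteDimensional ℝ V] {L : V ≃ₗᵢ[ℝ] V} {M : Submodule ℝ V}
    (hM : finrank ℝ M + 1 = finrank ℝ V) (hL : ∀ v ∈ M, L v = v) :
    finrank ℝ L.movSpace ≤ 1 := by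
  have hker : M ≤ LinearMap.ker ((L : V →ₗ[ℝ] V) - 1) := fun v hv => by simp [hL v hv]
  have := finrank_mono hker
  have := ((L : V →ₗ[ℝ] V) - 1).finrank_range_add_finrank_ker
  unfold movSpace
  omega

noncomputable def isometryEquivAt (p : E) : (V ≃ₗᵢ[ℝ] V) →* (E ≃ᵢ E) where
  toFun L := ((AffineIsometryEquiv.vaddConst ℝ p).symm.trans
    (L.toAffineIsometryEquiv.trans (AffineIsometryEquiv.vaddConst ℝ p))).toIsometryEquiv
  map_one' := by ext x; simp
  map_mul' L L' := by ext x; simp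

theorem isometryEquivAt_apply (p : E) (L : V ≃ₗᵢ[ℝ] V) (x : E) :
    isometryEquivAt p L x = L (x -ᵥ p) +ᵥ p :=
  rfl

end NormedSpace

variable {V : Type*} [NormedAddCommGroup V] [InnerProductSpace ℝ V] [FiniteDimensional ℝ V]

theorem exists_reflections_prod_eq (L : V ≃ₗᵢ[ℝ] V) :
    ∃ l : List V, l.length ≤ finrank ℝ L.movSpace ∧ (∀ v ∈ l, v ≠ 0) ∧
      (l.map fun v => reflection (ℝ ∙ v)ᗮ).prod = L := by
  classical
  have hker : (ContinuousLinearMap.id ℝ V - L).ker = LinearMap.ker ((L : V →ₗ[ℝ] V) - 1) := by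
    rw [← LinearMap.ker_neg]
    ext v
    simp
  obtain ⟨l, hlen, hprod⟩ := L.reflections_generate_dim_aux
    (n := finrank ℝ L.movSpace) (by rw [hker, LinearMap.finrank_orthogonal_ker]; rfl)
  -- the factors with `v = 0` are reflections in `⊤`, i.e. identities
  refine ⟨l.filter (· ≠ 0), (List.length_filter_le _ _).trans hlen, by simp, ?_⟩
  have htop : reflection (⊤ : Submodule ℝ V) = 1 := by
    ext x
    exact reflection_mem_subspace_eq_self mem_top
  rw [hprod]
  clear hprod hlen
  induction l with
  | nil => rfl
  | cons v l ih =>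
    rcases eq_or_ne v 0 with rfl | hv
    · simpa [htop] using ih
    · simpa [hv] using ih

theorem det_eq_neg_one_of_finrank_movSpace_le_one {L : V ≃ₗᵢ[ℝ] V} (hL : L ≠ 1)
    (h : finrank ℝ L.movSpace ≤ 1) : LinearMap.det (L : V →ₗ[ℝ] V) = -1 := by
  obtain ⟨l, hlen, hne, hl⟩ := L.exists_reflections_prod_eq
  rcases l with _ | ⟨v, _ | ⟨u, l⟩⟩
  · exact absurd hl.symm hL
  · subst hl
    simp only [List.map_cons, List.map_nil, List.prod_cons, List.prod_nil, mul_one]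
    have hdet := det_reflection (ℝ ∙ v)ᗮ
    rw [orthogonal_orthogonal, finrank_span_singleton (hne v (by simp)), pow_one] at hdet
    exact hdet
  · simp only [List.length_cons] at hlen
    omega

end LinearIsometryEquiv

namespace IsometryEquiv

open LinearIsometryEquiv

section NormedSpace

variable {V E : Type*} [NormedAddCommGroup V] [MetricSpace E] [NormedAddTorsor V E]

def mov (w : E ≃ᵢ E) : Set V := {v | ∃ x : E, w x -ᵥ x = v}

theorem vsub_mem_mov (w : E ≃ᵢ E) (x : E) : w x -ᵥ x ∈ mov w := ⟨x, rfl⟩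

variable [NormedSpace ℝ V]

noncomputable def linearPart : (E ≃ᵢ E) →* (V ≃ₗᵢ[ℝ] V) where
  toFun w := w.toRealAffineIsometryEquiv.linearIsometryEquiv
  map_one' := by
    ext v
    obtain ⟨p⟩ : Nonempty E := inferInstance
    rw [← vadd_vsub v p, AffineIsometryEquiv.map_vsub]
    rfl
  map_mul' f g := by
    ext v
    obtain ⟨p⟩ : Nonempty E := inferInstance
    rw [← vadd_vsub v p]
    simp only [LinearIsometryEquiv.coe_mul, Function.comp_apply, AffineIsometryEquiv.map_vsub]
    rfl

theorem linearPart_map_vsub (w : E ≃ᵢ E) (x y : E) : linearPart w (x -ᵥ y) = w x -ᵥ w y :=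
  w.toRealAffineIsometryEquiv.map_vsub x y

theorem linearPart_constVAdd (v : V) :
    linearPart (AffineIsometryEquiv.constVAdd ℝ E v).toIsometryEquiv = 1 := by
  ext u
  obtain ⟨p⟩ : Nonempty E := inferInstance
  rw [← vadd_vsub u p, linearPart_map_vsub]
  simp only [AffineIsometryEquiv.coe_toIsometryEquiv, AffineIsometryEquiv.coe_constVAdd,
    vadd_vsub_vadd_cancel_left]
  rfl

theorem linearPart_apply_of_mem_direction {w : E ≃ᵢ E} {H : AffineSubspace ℝ E}
    (hH : (H : Set E).Nonempty) (hw : ∀ x ∈ H, w x = x) {v : V} (hv : v ∈ H.direction) :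
    linearPart w v = v := by
  obtain ⟨p, hp⟩ := hH
  rw [← vadd_vsub v p, linearPart_map_vsub, hw p hp,
    hw _ (AffineSubspace.vadd_mem_of_mem_direction hv hp)]

theorem eq_isometryEquivAt_linearPart {w : E ≃ᵢ E} {p : E} (hp : w p = p) :
    w = (linearPart w).isometryEquivAt p := by
  ext x
  rw [isometryEquivAt_apply, linearPart_map_vsub, hp, vsub_vadd]

theorem vectorSpan_mov (w : E ≃ᵢ E) : vectorSpan ℝ (mov w) = (linearPart w).movSpace := by
  set φ : E →ᵃ[ℝ] V := w.toRealAffineIsometryEquiv.toAffineMap -ᵥ AffineMap.id ℝ E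
  have hφ : mov w = φ '' Set.univ := by
    rw [Set.image_univ]
    rfl
  rw [hφ, ← AffineMap.map_vectorSpan, AffineSubspace.vectorSpan_eq_top_of_affineSpan_eq_top ℝ V E
    (AffineSubspace.span_univ ℝ V E), Submodule.map_top]
  rfl

theorem exists_apply_eq_of_vsub_mem_vectorSpan {w : E ≃ᵢ E} {x₀ : E}
    (h : w x₀ -ᵥ x₀ ∈ vectorSpan ℝ (mov w)) : ∃ x, w x = x := by
  obtain ⟨u, hu⟩ := (vectorSpan_mov w).le h
  replace hu : linearPart w u - u = w x₀ -ᵥ x₀ := by simpa using hu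
  refine ⟨-u +ᵥ x₀, ?_⟩
  have h := linearPart_map_vsub w (-u +ᵥ x₀) x₀
  rw [vadd_vsub, map_neg] at h
  rw [← vsub_vadd (w _) (w x₀), ← h, ← vsub_vadd (w x₀) x₀, ← hu, vadd_vadd]
  congr 1
  abel

theorem span_mov_mul_le (f g : E ≃ᵢ E) :
    span ℝ (mov (f * g)) ≤ span ℝ (mov f) ⊔ span ℝ (mov g) := by
  rw [span_le]
  rintro _ ⟨x, rfl⟩
  rw [mul_apply, ← vsub_add_vsub_cancel (f (g x)) (g x) x]
  exact add_mem (mem_sup_left (subset_span (vsub_mem_mov f (g x))))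
    (mem_sup_right (subset_span (vsub_mem_mov g x)))

theorem finrank_vectorSpan_mov_lt_finrank_span_mov [FiniteDimensional ℝ V] {w : E ≃ᵢ E}
    (hw : ¬∃ x, w x = x) : finrank ℝ (vectorSpan ℝ (mov w)) < finrank ℝ (span ℝ (mov w)) := by
  obtain ⟨x₀⟩ : Nonempty E := inferInstance
  have ht : w x₀ -ᵥ x₀ ∉ vectorSpan ℝ (mov w) := fun h =>
    hw (exists_apply_eq_of_vsub_mem_vectorSpan h)
  rw [Nat.lt_iff_add_one_le, ← finrank_sup_span_singleton ht]
  exact finrank_mono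
    (sup_le (vectorSpan_le_span _) (span_le.2 (by simpa using subset_span (vsub_mem_mov w x₀))))

end NormedSpace

end IsometryEquiv

section Euclidean

open IsometryEquiv LinearIsometryEquiv

variable {V E : Type*} [NormedAddCommGroup V] [InnerProductSpace ℝ V] [MetricSpace E]
  [NormedAddTorsor V E]

theorem isometryEquivAt_reflection_mul_eq_constVAdd (p : E) (v : V) :
    (reflection (ℝ ∙ v)ᗮ).isometryEquivAt ((2⁻¹ : ℝ) • v +ᵥ p) *
      (reflection (ℝ ∙ v)ᗮ).isometryEquivAt p =
      (AffineIsometryEquiv.constVAdd ℝ E v).toIsometryEquiv := by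
  ext x
  change _ = v +ᵥ x
  rw [IsometryEquiv.mul_apply, isometryEquivAt_apply, isometryEquivAt_apply,
    vsub_vadd_eq_vsub_sub, vadd_vsub, LinearIsometryEquiv.map_sub, reflection_reflection,
    LinearIsometryEquiv.map_smul, reflection_orthogonalComplement_singleton_eq_neg, vadd_vadd]
  conv_rhs => rw [← vsub_vadd x p, vadd_vadd]
  congr 1
  module

variable [FiniteDimensional ℝ V]

theorem isEuclideanReflection_isometryEquivAt_reflection (p : E) {v : V} (hv : v ≠ 0) :
    IsEuclideanReflection ((reflection (ℝ ∙ v)ᗮ).isometryEquivAt p) := by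
  refine ⟨fun h => hv ?_, AffineSubspace.mk' p (ℝ ∙ v)ᗮ, ⟨p, AffineSubspace.self_mem_mk' _ _⟩,
    ?_, fun x hx => ?_⟩
  · have h' := congr($h (v +ᵥ p))
    rw [isometryEquivAt_apply, vadd_vsub, reflection_orthogonalComplement_singleton_eq_neg,
      IsometryEquiv.coe_one, id, vadd_right_cancel_iff, neg_eq_iff_add_eq_zero, ← two_smul ℝ,
      smul_eq_zero] at h'
    exact h'.resolve_left two_ne_zero
  · have := (ℝ ∙ v).finrank_add_finrank_orthogonal
    rw [finrank_span_singleton hv] at this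
    rw [AffineSubspace.direction_mk']
    omega
  · rw [AffineSubspace.mem_mk'] at hx
    rw [isometryEquivAt_apply, reflection_mem_subspace_eq_self hx, vsub_vadd]

namespace IsEuclideanReflection

theorem finrank_span_mov_le_one {r : E ≃ᵢ E} (hr : IsEuclideanReflection r) :
    finrank ℝ (span ℝ (mov r)) ≤ 1 := by
  obtain ⟨-, H, ⟨p, hp⟩, hH, hfix⟩ := hr
  rw [span_eq_vectorSpan_of_zero_mem (s := mov r) ⟨p, by rw [hfix p hp, vsub_self]⟩,
    vectorSpan_mov]
  exact finrank_movSpace_le_one hH fun v hv => linearPart_apply_of_mem_direction ⟨p, hp⟩ hfix hv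

theorem det_linearPart {r : E ≃ᵢ E} (hr : IsEuclideanReflection r) :
    LinearMap.det (linearPart r : V →ₗ[ℝ] V) = -1 := by
  obtain ⟨hne, H, ⟨p, hp⟩, hH, hfix⟩ := hr
  refine det_eq_neg_one_of_finrank_movSpace_le_one (fun h => hne ?_)
    (finrank_movSpace_le_one hH fun v hv => linearPart_apply_of_mem_direction ⟨p, hp⟩ hfix hv)
  rw [eq_isometryEquivAt_linearPart (hfix p hp), h, map_one]

end IsEuclideanReflection

namespace IsometryEquiv

def reflectionLengths (w : E ≃ᵢ E) : Set ℕ :=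
  {m | ∃ l : List (E ≃ᵢ E), (∀ r ∈ l, IsEuclideanReflection r) ∧ l.length = m ∧ l.prod = w}

theorem finrank_span_mov_list_prod_le {l : List (E ≃ᵢ E)}
    (hl : ∀ r ∈ l, IsEuclideanReflection r) : finrank ℝ (span ℝ (mov l.prod)) ≤ l.length := by
  induction l with
  | nil =>
    rw [List.prod_nil, List.length_nil, nonpos_iff_eq_zero, finrank_eq_zero, span_eq_bot]
    rintro _ ⟨x, rfl⟩
    exact vsub_self x
  | cons r l ih =>
    rw [List.forall_mem_cons] at hl
    rw [List.prod_cons, List.length_cons, add_comm]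
    calc finrank ℝ (span ℝ (mov (r * l.prod)))
        ≤ finrank ℝ (span ℝ (mov r) ⊔ span ℝ (mov l.prod) : Submodule ℝ V) :=
          finrank_mono (span_mov_mul_le _ _)
      _ ≤ finrank ℝ (span ℝ (mov r)) + finrank ℝ (span ℝ (mov l.prod)) :=
          finrank_add_le_finrank_add_finrank _ _
      _ ≤ 1 + l.length := add_le_add hl.1.finrank_span_mov_le_one (ih hl.2)

theorem det_linearPart_list_prod {l : List (E ≃ᵢ E)} (hl : ∀ r ∈ l, IsEuclideanReflection r) :
    LinearMap.det (linearPart l.prod : V →ₗ[ℝ] V) = (-1) ^ l.length := by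
  induction l with
  | nil =>
    rw [List.prod_nil, map_one]
    exact LinearMap.det_id
  | cons r l ih =>
    rw [List.forall_mem_cons] at hl
    have hcoe : ((linearPart r * linearPart l.prod : V ≃ₗᵢ[ℝ] V) : V →ₗ[ℝ] V) =
        (linearPart r : V →ₗ[ℝ] V) * (linearPart l.prod : V →ₗ[ℝ] V) := rfl
    rw [List.prod_cons, map_mul, hcoe, map_mul, ih hl.2, hl.1.det_linearPart, List.length_cons,
      pow_succ, mul_comm]

theorem isLeast_reflectionLengths_of_apply_eq {w : E ≃ᵢ E} {p : E} (hp : w p = p) :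
    IsLeast w.reflectionLengths (finrank ℝ (vectorSpan ℝ (mov w))) := by
  have hlower : ∀ m ∈ w.reflectionLengths, finrank ℝ (vectorSpan ℝ (mov w)) ≤ m := by
    rintro _ ⟨l, hl, rfl, rfl⟩
    exact (finrank_mono (vectorSpan_le_span _)).trans (finrank_span_mov_list_prod_le hl)
  refine ⟨?_, hlower⟩
  obtain ⟨A, hlen, hne, hprod⟩ := (linearPart w).exists_reflections_prod_eq
  set l := A.map fun v => (reflection (ℝ ∙ v)ᗮ).isometryEquivAt p
  have hl : ∀ r ∈ l, IsEuclideanReflection r := by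
    simp only [l, List.mem_map]
    rintro _ ⟨v, hv, rfl⟩
    exact isEuclideanReflection_isometryEquivAt_reflection p (hne v hv)
  have hmem : l.length ∈ w.reflectionLengths := by
    refine ⟨l, hl, rfl, ?_⟩
    rw [eq_isometryEquivAt_linearPart hp, ← hprod, map_list_prod, List.map_map]
    rfl
  have hlen' : l.length = finrank ℝ (vectorSpan ℝ (mov w)) :=
    le_antisymm (by rw [vectorSpan_mov]; simpa [l] using hlen) (hlower _ hmem)
  rwa [hlen'] at hmem

theorem isLeast_reflectionLengths_of_not_exists_apply_eq {w : E ≃ᵢ E} (hw : ¬∃ x, w x = x) :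
    IsLeast w.reflectionLengths (finrank ℝ (vectorSpan ℝ (mov w)) + 2) := by
  obtain ⟨x₀⟩ : Nonempty E := inferInstance
  set t := w x₀ -ᵥ x₀
  have ht : t ≠ 0 := fun h => hw ⟨x₀, vsub_eq_zero_iff_eq.1 h⟩
  set w' := (AffineIsometryEquiv.constVAdd ℝ E (-t)).toIsometryEquiv * w
  have hw' : w' x₀ = x₀ := by simp [w', t]
  have hlin : linearPart w' = linearPart w := by simp [w', linearPart_constVAdd]
  have hk : finrank ℝ (vectorSpan ℝ (mov w')) = finrank ℝ (vectorSpan ℝ (mov w)) := by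
    rw [vectorSpan_mov, vectorSpan_mov, hlin]
  obtain ⟨⟨l', hl', hlen', hprod'⟩, -⟩ := isLeast_reflectionLengths_of_apply_eq hw'
  set ρ : V ≃ₗᵢ[ℝ] V := reflection (ℝ ∙ t)ᗮ
  refine ⟨⟨ρ.isometryEquivAt ((2⁻¹ : ℝ) • t +ᵥ x₀) :: ρ.isometryEquivAt x₀ :: l', ?_, ?_, ?_⟩, ?_⟩
  · simp only [List.forall_mem_cons]
    exact ⟨isEuclideanReflection_isometryEquivAt_reflection _ ht,
      isEuclideanReflection_isometryEquivAt_reflection _ ht, hl'⟩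
  · simp [hlen', hk]
  · rw [List.prod_cons, List.prod_cons, ← mul_assoc, isometryEquivAt_reflection_mul_eq_constVAdd,
      hprod']
    ext x
    simp [w']
  · rintro _ ⟨l, hl, rfl, rfl⟩
    have hlt := (finrank_vectorSpan_mov_lt_finrank_span_mov hw).trans_le
      (finrank_span_mov_list_prod_le hl)
    have hparity : (-1 : ℝ) ^ l.length = (-1) ^ finrank ℝ (vectorSpan ℝ (mov l.prod)) := by
      rw [← det_linearPart_list_prod hl, ← hlin, ← hprod', det_linearPart_list_prod hl', hlen', hk]
    by_contra! hshort
    rw [show l.length = finrank ℝ (vectorSpan ℝ (mov l.prod)) + 1 by omega, pow_succ, mul_neg_one,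
      CharZero.neg_eq_self_iff] at hparity
    exact pow_ne_zero _ (by norm_num) hparity

end IsometryEquiv

end Euclidean

/-- Scherk's theorem: if `w` is an isometry of a euclidean space whose move-set
`Mov(w) = {w(x) -ᵥ x}` has dimension `k`, then the minimal number of reflections
needed to express `w` is `k` when `w` has a fixed point and `k + 2` otherwise. -/
theorem scherk_reflection_length
    {V E : Type*} [NormedAddCommGroup V] [InnerProductSpace ℝ V] [FiniteDimensional ℝ V]
    [MetricSpace E] [NormedAddTorsor V E] (w : E ≃ᵢ E) (k : ℕ)
    (hk : k = finrank ℝ (vectorSpan ℝ {v : V | ∃ x : E, w x -ᵥ x = v})) :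
    ((∃ x : E, w x = x) →
      IsLeast {m : ℕ | ∃ l : List (E ≃ᵢ E), (∀ r ∈ l, IsEuclideanReflection r) ∧
        l.length = m ∧ l.prod = w} k) ∧
    ((¬ ∃ x : E, w x = x) →
      IsLeast {m : ℕ | ∃ l : List (E ≃ᵢ E), (∀ r ∈ l, IsEuclideanReflection r) ∧
        l.length = m ∧ l.prod = w} (k + 2)) := by
  subst hk
  exact ⟨fun ⟨_, hx⟩ => IsometryEquiv.isLeast_reflectionLengths_of_apply_eq hx,
    IsometryEquiv.isLeast_reflectionLengths_of_not_exists_apply_eq⟩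
end

section
/- For an isometry w of a euclidean space E with move-set in standard form Mov(w) = U + μ (with μ ∈ U^⊥), the space of directions of the min-set Min(w) is the orthogonal complement U^⊥ of the space of directions of the move-set. -/
/-!
Writing `w` as an affine isometry with linear part `L`, the displacement `g x = w x -ᵥ x` is an
affine map with linear part `L - 1`, so `Mov(w) = range g` forces `range (L - 1) = U` and `g` takes
the value `μ`. By Pythagoras `‖u + μ‖² = ‖u‖² + ‖μ‖²` for `u ∈ U`, so `Min(w)` is the fibre
`g ⁻¹' {μ}`, whose directions are `ker (L - 1)`. For an isometry, `ker (L - 1)` is the orthogonal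
complement of `range (L - 1)`.
-/

open Set

theorem LinearIsometry.ker_sub_id_eq_orthogonal_range_sub_id
    {V : Type*} [NormedAddCommGroup V] [InnerProductSpace ℝ V] (L : V →ₗᵢ[ℝ] V) :
    LinearMap.ker (L.toLinearMap - LinearMap.id) =
      (LinearMap.range (L.toLinearMap - LinearMap.id))ᗮ := by
  apply le_antisymm
  · rintro v hv _ ⟨z, rfl⟩
    have hLv : L v = v := sub_eq_zero.mp hv
    calc inner ℝ (L z - z) v = inner ℝ (L z) (L v) - inner ℝ z v := by rw [inner_sub_left, hLv]
      _ = 0 := by rw [L.inner_map_map, sub_self]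
  · intro v hv
    have horth : inner ℝ (L v - v) v = 0 := hv _ ⟨v, rfl⟩
    -- `v ⊥ L v - v` forces `⟪L v, v⟫ = ‖v‖²`, hence `‖L v - v‖² = ‖L v‖² - ‖v‖² = 0`.
    have hsq : ‖L v - v‖ ^ 2 = 0 := by
      rw [inner_sub_left, real_inner_self_eq_norm_sq] at horth
      rw [norm_sub_sq_real, L.norm_map]
      linarith
    simpa [sub_eq_zero] using hsq

theorem AffineMap.range_linear_eq_of_range_eq_image_add
    {k V P : Type*} [Ring k] [AddCommGroup V] [Module k V] [AddTorsor V P]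
    (g : P →ᵃ[k] V) (U : Submodule k V) (μ : V)
    (hg : range g = (· + μ) '' (U : Set V)) : LinearMap.range g.linear = U := by
  obtain ⟨x₀, hx₀⟩ : μ ∈ range g := hg ▸ ⟨0, U.zero_mem, zero_add μ⟩
  have hlin : ∀ v, g.linear v + μ = g (v +ᵥ x₀) := fun v => by
    rw [g.map_vadd, hx₀, vadd_eq_add]
  ext u
  constructor
  · rintro ⟨v, rfl⟩
    obtain ⟨u', hu', hgu'⟩ : g (v +ᵥ x₀) ∈ (· + μ) '' (U : Set V) := hg ▸ mem_range_self _
    rwa [← add_right_cancel (hgu'.trans (hlin v).symm)]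
  · intro hu
    obtain ⟨x, hx⟩ : u + μ ∈ range g := hg ▸ mem_image_of_mem _ hu
    exact ⟨x -ᵥ x₀, add_right_cancel ((hlin _).trans (by rw [vsub_vadd, hx]))⟩

theorem AffineMap.vectorSpan_preimage_singleton
    {k V₁ P₁ V₂ P₂ : Type*} [Ring k] [AddCommGroup V₁] [Module k V₁] [AddTorsor V₁ P₁]
    [AddCommGroup V₂] [Module k V₂] [AddTorsor V₂ P₂]
    (g : P₁ →ᵃ[k] P₂) {q : P₂} (hq : q ∈ range g) :
    vectorSpan k (g ⁻¹' {q}) = LinearMap.ker g.linear := by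
  apply le_antisymm
  · rw [vectorSpan_def, Submodule.span_le]
    rintro _ ⟨x, hx, y, hy, rfl⟩
    simp_all [LinearMap.mem_ker, g.linearMap_vsub]
  · obtain ⟨x₀, hx₀⟩ := hq
    intro v hv
    have hv' : v +ᵥ x₀ ∈ g ⁻¹' {q} := by
      rw [mem_preimage, g.map_vadd, LinearMap.mem_ker.mp hv, zero_vadd, hx₀, mem_singleton_iff]
    simpa using vsub_mem_vectorSpan k hv' (show x₀ ∈ g ⁻¹' {q} from hx₀)

theorem setOf_forall_norm_le_eq_preimage_of_range_eq_image_add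
    {α V : Type*} [NormedAddCommGroup V] [InnerProductSpace ℝ V]
    (g : α → V) (U : Submodule ℝ V) {μ : V} (hμ : μ ∈ Uᗮ)
    (hg : range g = (· + μ) '' (U : Set V)) :
    {x | ∀ y, ‖g x‖ ≤ ‖g y‖} = g ⁻¹' {μ} := by
  have hpyth : ∀ u ∈ U, ‖u + μ‖ * ‖u + μ‖ = ‖u‖ * ‖u‖ + ‖μ‖ * ‖μ‖ := fun u hu =>
    norm_add_sq_eq_norm_sq_add_norm_sq_real (Submodule.inner_right_of_mem_orthogonal hu hμ)
  have hdecomp : ∀ x, ∃ u ∈ U, u + μ = g x := fun x =>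
    (hg ▸ mem_range_self x : g x ∈ (· + μ) '' (U : Set V))
  obtain ⟨x₀, hx₀⟩ : μ ∈ range g := hg ▸ ⟨0, U.zero_mem, zero_add μ⟩
  ext x
  obtain ⟨u, hu, hgx⟩ := hdecomp x
  simp only [mem_ofPred_eq, mem_preimage, mem_singleton_iff, ← hgx, add_eq_right]
  constructor
  · intro hx
    have hle : ‖u + μ‖ ≤ ‖μ‖ := hx₀ ▸ hx x₀
    have : ‖u‖ * ‖u‖ ≤ 0 := by nlinarith [hpyth u hu, norm_nonneg (u + μ)]
    exact norm_eq_zero.mp (by nlinarith [norm_nonneg u])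
  · rintro rfl y
    obtain ⟨u', hu', hgy⟩ := hdecomp y
    rw [zero_add, ← hgy]
    nlinarith [hpyth u' hu', norm_nonneg (u' + μ), norm_nonneg μ, mul_self_nonneg ‖u'‖]

theorem direction_minSet_eq_orthogonal_general
    {V E : Type*} [NormedAddCommGroup V] [InnerProductSpace ℝ V]
    [MetricSpace E] [NormedAddTorsor V E] (w : E ≃ᵢ E)
    (U : Submodule ℝ V) (μ : V) (hμ : μ ∈ Uᗮ)
    (hMov : {v : V | ∃ x : E, w x -ᵥ x = v} = (fun u => u + μ) '' (U : Set V)) :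
    vectorSpan ℝ {x : E | ∀ y : E, dist (w x) x ≤ dist (w y) y} = Uᗮ := by
  set A := w.toRealAffineIsometryEquiv
  set g : E →ᵃ[ℝ] V := A.toAffineEquiv.toAffineMap -ᵥ AffineMap.id ℝ E
  have hg : range g = (· + μ) '' (U : Set V) := hMov
  have hmin : {x : E | ∀ y : E, dist (w x) x ≤ dist (w y) y} = g ⁻¹' {μ} := by
    simp_rw [dist_eq_norm_vsub V]
    exact setOf_forall_norm_le_eq_preimage_of_range_eq_image_add g U hμ hg
  have hμg : μ ∈ range g := hg ▸ ⟨0, U.zero_mem, zero_add μ⟩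
  rw [hmin, g.vectorSpan_preimage_singleton hμg, ← g.range_linear_eq_of_range_eq_image_add U μ hg]
  exact A.linearIsometryEquiv.toLinearIsometry.ker_sub_id_eq_orthogonal_range_sub_id

/-- For an isometry `w` of a euclidean space with move-set in standard form
`Mov(w) = U + μ` with `μ ∈ U ᗮ`, the space of directions of the min-set `Min(w)` is
the orthogonal complement `U ᗮ` of the space of directions of the move-set. -/
theorem direction_minSet_eq_orthogonal
    {V E : Type*} [NormedAddCommGroup V] [InnerProductSpace ℝ V] [FiniteDimensional ℝ V]
    [MetricSpace E] [NormedAddTorsor V E] (w : E ≃ᵢ E)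
    (U : Submodule ℝ V) (μ : V) (hμ : μ ∈ Uᗮ)
    (hMov : {v : V | ∃ x : E, w x -ᵥ x = v} = (fun u => u + μ) '' (U : Set V)) :
    vectorSpan ℝ {x : E | ∀ y : E, dist (w x) x ≤ dist (w y) y} = Uᗮ :=
  direction_minSet_eq_orthogonal_general w U μ hμ hMov
end

section
/- Two linear orderings of the standard generating set S of a Coxeter group W that induce the same acyclic orientation of the Coxeter diagram Γ (orienting each edge from the earlier to the later generator) yield the same Coxeter element, i.e. the same product of the generators. -/
/-!
If two orderings of the generators disagree on the relative order of two generators, those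
generators are joined by no edge of the diagram and hence commute. Pulling the first letter
of one ordering to the front of the other therefore only moves it past letters it commutes
with, and induction on the length finishes the argument; this works for any permutation of
any word in a monoid.
-/

namespace List

variable {α M : Type*}

theorem Perm.prod_map_eq_of_commute_of_pair_sublist [Monoid M] {f : α → M} {l₁ l₂ : List α}
    (hp : l₁ ~ l₂) (hcomm : ∀ a b, [a, b] <+ l₁ → [b, a] <+ l₂ → Commute (f a) (f b)) :
    (l₁.map f).prod = (l₂.map f).prod := by
  induction l₁ generalizing l₂ with
  | nil => rw [nil_perm.mp hp]
  | cons a rest ih =>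
    obtain ⟨p, q, rfl⟩ := append_of_mem (hp.subset mem_cons_self)
    have hrest : rest ~ p ++ q := (hp.trans perm_middle).cons_inv
    have ha_comm : Commute (f a) (p.map f).prod := by
      refine Commute.list_prod_right _ _ fun y hy => ?_
      obtain ⟨x, hx, rfl⟩ := mem_map.mp hy
      rcases mem_cons.mp (hp.symm.subset (mem_append_left _ hx)) with rfl | hx_rest
      · exact Commute.refl _
      · exact hcomm a x (cons_sublist_cons.mpr (singleton_sublist.mpr hx_rest))
          ((singleton_sublist.mpr hx).append (singleton_sublist.mpr mem_cons_self))
    have ih' := ih hrest fun x y hxy hyx =>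
      hcomm x y (hxy.cons a) (hyx.trans ((Sublist.refl p).append (sublist_cons_self a q)))
    calc ((a :: rest).map f).prod = f a * ((p ++ q).map f).prod := by rw [map_cons, prod_cons, ih']
      _ = ((p ++ a :: q).map f).prod := by
        simp only [map_append, map_cons, prod_append, prod_cons, ← mul_assoc, ha_comm.eq]

theorem Nodup.idxOf_lt_idxOf_of_pair_sublist [DecidableEq α] {l : List α} {a b : α}
    (hl : l.Nodup) (hab : [a, b] <+ l) : l.idxOf a < l.idxOf b := by
  obtain ⟨r₁, r₂, rfl, ha, hb⟩ := cons_sublist_iff.mp hab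
  have hb₁ : b ∉ r₁ := fun hb₁ => disjoint_of_nodup_append hl hb₁ (singleton_sublist.mp hb)
  rw [idxOf_append_of_mem ha, idxOf_append_of_notMem hb₁]
  exact (idxOf_lt_length_iff.mpr ha).trans_le (Nat.le_add_right _ _)

end List

theorem CoxeterSystem.commute_simple_of_eq_two {B W : Type*} [Group W] {M : CoxeterMatrix B}
    (cs : CoxeterSystem M W) {i i' : B} (h : M i i' = 2) :
    Commute (cs.simple i) (cs.simple i') := by
  have hsq := cs.simple_mul_simple_pow i i'
  rw [h, sq, mul_eq_one_iff_eq_inv, mul_inv_rev, cs.inv_simple, cs.inv_simple] at hsq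
  exact hsq

/-- Two linear orderings of the standard generating set of a Coxeter group that induce
the same acyclic orientation of the Coxeter diagram (orienting each edge — i.e. each
pair of non-commuting generators — from the earlier to the later one) yield the same
Coxeter element. -/
theorem coxeterElement_eq_of_same_orientation
    {B W : Type*} [DecidableEq B] [Group W] {M : CoxeterMatrix B}
    (cs : CoxeterSystem M W) (l₁ l₂ : List B)
    (h₁ : l₁.Nodup) (h₂ : l₂.Nodup)
    (hall₁ : ∀ b : B, b ∈ l₁) (hall₂ : ∀ b : B, b ∈ l₂)
    (horient : ∀ s t : B, s ≠ t → M s t ≠ 2 →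
      (l₁.idxOf s < l₁.idxOf t ↔ l₂.idxOf s < l₂.idxOf t)) :
    (l₁.map cs.simple).prod = (l₂.map cs.simple).prod := by
  have hperm : l₁.Perm l₂ := (List.perm_ext_iff_of_nodup h₁ h₂).mpr fun b => by simp [hall₁, hall₂]
  refine hperm.prod_map_eq_of_commute_of_pair_sublist fun s t hst hts => ?_
  have hlt₁ := h₁.idxOf_lt_idxOf_of_pair_sublist hst
  have hlt₂ := h₂.idxOf_lt_idxOf_of_pair_sublist hts
  by_contra hnc
  have hne : s ≠ t := by rintro rfl; exact hnc (Commute.refl _)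
  have hM : M s t ≠ 2 := fun h => hnc (cs.commute_simple_of_eq_two h)
  exact absurd ((horient s t hne hM).mp hlt₁) hlt₂.not_gt
end

section
/- Any two acyclic orientations of a finite tree are connected by a sequence of source-sink flips, where a source-sink flip reverses all edges incident to a vertex that is a source or a sink. -/
/-- An orientation of a simple graph `G`: a relation selecting, for each edge of `G`,
exactly one of its two directions, and holding only between adjacent vertices. -/
def IsOrientation {V : Type*} (G : SimpleGraph V) (o : V → V → Prop) : Prop :=
  (∀ u v, o u v → G.Adj u v) ∧ (∀ u v, G.Adj u v → (o u v ↔ ¬ o v u))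

/-- `x` is a source of the orientation `o`: no edge points into `x`. -/
def IsSourceVertex {V : Type*} (o : V → V → Prop) (x : V) : Prop := ∀ v, ¬ o v x

/-- `x` is a sink of the orientation `o`: no edge points out of `x`. -/
def IsSinkVertex {V : Type*} (o : V → V → Prop) (x : V) : Prop := ∀ v, ¬ o x v

/-- The orientation obtained from `o` by reversing all edges incident to `x`. -/
def flipVertex {V : Type*} (o : V → V → Prop) (x : V) : V → V → Prop := fun u v =>
  ((u = x ∨ v = x) ∧ o v u) ∨ (¬ (u = x ∨ v = x) ∧ o u v)

/-- A single source-sink flip relating two orientations. -/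
def FlipStep {V : Type*} (o o' : V → V → Prop) : Prop :=
  ∃ x, (IsSourceVertex o x ∨ IsSinkVertex o x) ∧ o' = flipVertex o x

/-!
Root the tree at `r` and let `towardRoot G r` orient every edge towards `r`; since flips are
reversible, it suffices to flip every orientation `o` into `towardRoot G r`. If some edge of `o`
points away from the root, a deepest vertex `v` entered by such an edge is a sink: its parent
points to it, and by maximality so do its children. Flipping `v` repairs the edge to its parent
and can misorient only the at most `|V|` edges to its children, one level deeper. Weighting a
misoriented edge into depth `k` by `(|V| + 1) ^ (|V| - k)` turns this into a strict decrease.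
-/

section

variable {V : Type*}

theorem flipVertex_flipVertex (o : V → V → Prop) (x : V) :
    flipVertex (flipVertex o x) x = o := by
  funext u v
  by_cases h : u = x ∨ v = x <;> simp only [flipVertex, eq_iff_iff] <;> tauto

theorem IsSinkVertex.isSourceVertex_flipVertex {o : V → V → Prop} {x : V}
    (h : IsSinkVertex o x) : IsSourceVertex (flipVertex o x) x := by
  rintro v (⟨-, hxv⟩ | ⟨hx, -⟩)
  exacts [h v hxv, hx (Or.inr rfl)]

theorem IsSourceVertex.isSinkVertex_flipVertex {o : V → V → Prop} {x : V}
    (h : IsSourceVertex o x) : IsSinkVertex (flipVertex o x) x := by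
  rintro v (⟨-, hvx⟩ | ⟨hx, -⟩)
  exacts [h v hvx, hx (Or.inl rfl)]

theorem FlipStep.symm {o o' : V → V → Prop} (h : FlipStep o o') : FlipStep o' o := by
  obtain ⟨x, hx, rfl⟩ := h
  refine ⟨x, ?_, (flipVertex_flipVertex o x).symm⟩
  exact hx.symm.imp IsSinkVertex.isSourceVertex_flipVertex
    IsSourceVertex.isSinkVertex_flipVertex

instance : Std.Symm (FlipStep (V := V)) := ⟨fun _ _ => FlipStep.symm⟩

theorem IsOrientation.flipVertex {G : SimpleGraph V} {o : V → V → Prop}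
    (h : IsOrientation G o) (x : V) : IsOrientation G (flipVertex o x) := by
  refine ⟨?_, fun u v huv => ?_⟩
  · rintro u v (⟨-, hvu⟩ | ⟨-, huv⟩)
    exacts [(h.1 _ _ hvu).symm, h.1 _ _ huv]
  · have huv_iff := h.2 u v huv
    have hvu_iff := h.2 v u huv.symm
    by_cases hx : u = x ∨ v = x
    · simp only [_root_.flipVertex, hx, hx.symm]
      tauto
    · have hx' : ¬(v = x ∨ u = x) := fun h => hx h.symm
      simp only [_root_.flipVertex, hx, hx']
      tauto

theorem SimpleGraph.IsTree.eq_of_adj_of_dist_add_one_eq {G : SimpleGraph V} (hG : G.IsTree)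
    (r : V) {p q v : V} (hp : G.Adj p v) (hq : G.Adj q v)
    (hpv : G.dist r p + 1 = G.dist r v) (hqv : G.dist r q + 1 = G.dist r v) : p = q := by
  classical
  obtain ⟨P, hP, hPlen⟩ := hG.connected.exists_path_of_dist r v
  have eq_penultimate : ∀ u, G.Adj u v → G.dist r u + 1 = G.dist r v → u = P.penultimate := by
    intro u hu huv
    obtain ⟨Q, hQ, hQlen⟩ := hG.connected.exists_path_of_dist r u
    have hvQ : v ∉ Q.support := fun hv => by
      have := dist_le (Q.takeUntil v hv)
      have := Q.length_takeUntil_le_length hv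
      omega
    exact hG.isAcyclic.eq_penultimate_of_adj_end hP hu.symm
      (hG.isAcyclic.mem_support_of_ne_mem_support_of_adj_of_isPath hP hQ hu.symm hvQ)
  rw [eq_penultimate p hp hpv, eq_penultimate q hq hqv]

open scoped Classical in
noncomputable def downPotential [Fintype V] (d : V → ℕ) (D : ℕ) (o : V → V → Prop) : ℕ :=
  ∑ e : V × V, if o e.1 e.2 ∧ d e.1 < d e.2 then (Fintype.card V + 1) ^ (D - d e.2) else 0

theorem downPotential_flipVertex_lt [Fintype V] {d : V → ℕ} {D : ℕ} {o : V → V → Prop}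
    {p v : V} (hv : IsSinkVertex o v) (hpv : o p v) (hd : d p < d v) (hD : d v < D) :
    downPotential d D (flipVertex o v) < downPotential d D o := by
  classical
  unfold downPotential
  set B := Fintype.card V + 1
  set b := B ^ (D - d v - 1)
  have hbB : B ^ (D - d v) = B * b := by rw [← pow_succ']; congr 1; omega
  have pointwise : ∀ e : V × V,
      (if flipVertex o v e.1 e.2 ∧ d e.1 < d e.2 then B ^ (D - d e.2) else 0)
        + (if e = (p, v) then B ^ (D - d v) else 0)
      ≤ (if o e.1 e.2 ∧ d e.1 < d e.2 then B ^ (D - d e.2) else 0)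
        + (if e.1 = v then b else 0) := by
    rintro ⟨u, w⟩
    by_cases hw : w = v
    · subst hw
      have : ¬ flipVertex o w u w := by
        rintro (⟨-, h⟩ | ⟨h, -⟩)
        exacts [hv u h, h (Or.inr rfl)]
      by_cases hu : u = p
      · subst hu; simp [this, hpv, hd]
      · simp [this, hu]
    · have hne : (u, w) ≠ (p, v) := fun h => hw (Prod.ext_iff.1 h).2
      by_cases hu : u = v
      · subst hu
        simp only [if_neg hne, add_zero]
        refine le_add_left ?_
        split_ifs with h
        · exact Nat.pow_le_pow_right (by positivity) (by omega)
        · exact Nat.zero_le _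
      · have : flipVertex o v u w ↔ o u w := by simp [_root_.flipVertex, hu, hw]
        simp [this, hne, hu]
  have hsum := Finset.sum_le_sum fun e (_ : e ∈ Finset.univ) => pointwise e
  have hrow : ∑ e : V × V, (if e.1 = v then b else 0) = Fintype.card V * b := by
    simp [Fintype.sum_prod_type_right]
  rw [Finset.sum_add_distrib, Finset.sum_add_distrib, Finset.sum_ite_eq', hrow,
    if_pos (Finset.mem_univ _), hbB, add_mul, one_mul] at hsum
  have hb : 0 < b := by positivity
  omega

def towardRoot (G : SimpleGraph V) (r : V) : V → V → Prop := fun u v =>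
  G.Adj u v ∧ G.dist r v < G.dist r u

namespace IsOrientation

variable {G : SimpleGraph V} {o : V → V → Prop}

theorem eq_towardRoot (h : IsOrientation G o) {r : V}
    (hdown : ∀ u w, o u w → G.dist r w < G.dist r u) : o = towardRoot G r := by
  funext u w
  refine propext ⟨fun huw => ⟨h.1 _ _ huw, hdown _ _ huw⟩, fun ⟨hadj, hlt⟩ => ?_⟩
  by_contra huw
  have hwu : o w u := not_not.1 (mt (h.2 u w hadj).2 huw)
  exact (hdown w u hwu).not_gt hlt

theorem exists_isSinkVertex_of_ne_towardRoot [Finite V] (h : IsOrientation G o)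
    (hG : G.IsTree) {r : V} (hne : o ≠ towardRoot G r) :
    ∃ p v, o p v ∧ G.dist r p < G.dist r v ∧ IsSinkVertex o v := by
  obtain ⟨u, w, huw, hle⟩ : ∃ u w, o u w ∧ G.dist r u ≤ G.dist r w := by
    by_contra! H
    exact hne (h.eq_towardRoot H)
  have hlt := lt_of_le_of_ne hle (hG.dist_ne_of_adj r (h.1 _ _ huw))
  set S := {v | ∃ p, o p v ∧ G.dist r p < G.dist r v}
  obtain ⟨v, ⟨p, hpv, hp⟩, hmax⟩ :=
    S.exists_max_image (G.dist r) S.toFinite ⟨w, u, huw, hlt⟩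
  refine ⟨p, v, hpv, hp, fun x hvx => ?_⟩
  have hadj := h.1 _ _ hvx
  have hpadj := h.1 _ _ hpv
  rcases hG.dist_eq_dist_add_one_of_adj r hadj with hxv | hdeeper
  · have hpdist := hG.dist_eq_dist_add_one_of_adj r hpadj
    obtain rfl : x = p :=
      hG.eq_of_adj_of_dist_add_one_eq r hadj.symm hpadj hxv.symm (by omega)
    exact (h.2 v x hadj).1 hvx hpv
  · have := hmax x ⟨v, hvx, by omega⟩
    omega

theorem reflTransGen_flipStep_towardRoot [Fintype V] (h : IsOrientation G o)
    (hG : G.IsTree) (r : V) : Relation.ReflTransGen FlipStep o (towardRoot G r) := by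
  generalize hn : downPotential (G.dist r) (Fintype.card V) o = n
  induction n using Nat.strong_induction_on generalizing o with
  | _ n ih =>
  by_cases hroot : o = towardRoot G r
  · rw [hroot]
  obtain ⟨p, v, hpv, hp, hv⟩ := h.exists_isSinkVertex_of_ne_towardRoot hG hroot
  have hD : G.dist r v < Fintype.card V := by
    obtain ⟨P, hP, hlen⟩ := hG.connected.exists_path_of_dist r v
    exact hlen ▸ hP.length_lt
  exact .head ⟨v, .inr hv, rfl⟩
    (ih _ (hn ▸ downPotential_flipVertex_lt hv hpv hp hD) (h.flipVertex v) rfl)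

end IsOrientation

end

/-- Any two (acyclic) orientations of a finite tree are connected by a sequence of
source-sink flips. -/
theorem tree_orientations_connected_by_flips
    {V : Type*} [Fintype V] (G : SimpleGraph V) (hG : G.IsTree)
    (o₁ o₂ : V → V → Prop) (h₁ : IsOrientation G o₁) (h₂ : IsOrientation G o₂) :
    Relation.ReflTransGen FlipStep o₁ o₂ := by
  obtain ⟨r⟩ := hG.connected.nonempty
  exact (h₁.reflTransGen_flipStep_towardRoot hG r).trans
    (Std.Symm.symm _ _ (h₂.reflTransGen_flipStep_towardRoot hG r))
end
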